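/- Let ξ > 0 and δ > 0, let X be a random variable whose law has density ψ(·; ξ, δ) with respect to Lebesgue measure, and let F denote the cumulative distribution function of the chi-squared distribution with one degree of freedom. Then for every t with 0 < t ≤ ξ, the tail probability satisfies P(X > t) ≥ F(δ(t−ξ)²/(ξ²t)). -/

import Mathlib

open MeasureTheory Real ProbabilityTheory

/-- The inverse Gaussian density with mean `ξ` and shape `δ`. -/
noncomputable def invGaussPDF (ξ δ x : ℝ) : ℝ :=
  if 0 < x then
    Real.sqrt (δ / (2 * Real.pi * x ^ 3)) * Real.exp (-(δ * (x - ξ) ^ 2) / (2 * ξ ^ 2 * x))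
  else 0

namespace IGaux

/-- standard normal density -/
noncomputable def N (u : ℝ) : ℝ := Real.exp (-(u ^ 2 / 2)) / Real.sqrt (2 * Real.pi)

lemma N_cont : Continuous N := by
  unfold N
  fun_prop

lemma N_nonneg (u : ℝ) : 0 ≤ N u := by
  unfold N; positivity

lemma N_even (u : ℝ) : N (-u) = N u := by simp [N]

/-- primitive of the normal density -/
noncomputable def Phi (z : ℝ) : ℝ := ∫ u in (0:ℝ)..z, N u

lemma Phi_hasDerivAt (z : ℝ) : HasDerivAt Phi (N z) z :=
  (N_cont.integral_hasStrictDerivAt 0 z).hasDerivAt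

lemma Phi_cont : Continuous Phi := by
  have : Differentiable ℝ Phi := fun z => (Phi_hasDerivAt z).differentiableAt
  exact this.continuous

lemma Phi_neg (z : ℝ) : Phi (-z) = -Phi z := by
  have h := intervalIntegral.integral_comp_neg (a := -z) (b := 0) N
  simp only [neg_zero, neg_neg] at h
  have h2 : (∫ u in (-z)..(0:ℝ), N (-u)) = ∫ u in (-z)..(0:ℝ), N u := by
    simp [N_even]
  rw [h2] at h
  unfold Phi
  rw [intervalIntegral.integral_symm, h]


lemma gamma_integrable : Integrable (gammaPDFReal (1/2) (1/2)) := by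
  constructor
  · exact (measurable_gammaPDFReal _ _).aestronglyMeasurable
  · rw [hasFiniteIntegral_iff_ofReal (ae_of_all _ (gammaPDFReal_nonneg (by norm_num) (by norm_num)))]
    have := lintegral_gammaPDF_eq_one (a := 1/2) (r := 1/2) (by norm_num) (by norm_num)
    simp only [gammaPDF] at this
    rw [this]
    exact ENNReal.one_lt_top

lemma gamma_pdf_eq {y : ℝ} (hy : 0 < y) :
    gammaPDFReal (1/2) (1/2) y = 2 * (N (Real.sqrt y) * (1 / (2 * Real.sqrt y))) := by
  have hsy : 0 < Real.sqrt y := Real.sqrt_pos.2 hy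
  rw [gammaPDFReal, if_pos hy.le]
  have h1 : ((1:ℝ)/2 : ℝ) ^ ((1:ℝ)/2 : ℝ) = Real.sqrt (1/2) := (Real.sqrt_eq_rpow _).symm
  have h2 : y ^ ((1:ℝ)/2 - 1 : ℝ) = (Real.sqrt y)⁻¹ := by
    rw [show ((1:ℝ)/2 - 1 : ℝ) = -(1/2) by norm_num, Real.rpow_neg hy.le,
      ← Real.sqrt_eq_rpow]
  rw [h1, h2, Real.Gamma_one_half_eq]
  unfold N
  rw [show Real.sqrt y ^ 2 = y from Real.sq_sqrt hy.le]
  have hs2 : Real.sqrt (2 * Real.pi) = Real.sqrt 2 * Real.sqrt Real.pi :=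
    Real.sqrt_mul (by norm_num) _
  have hhalf : Real.sqrt ((1:ℝ)/2) = (Real.sqrt 2)⁻¹ := by
    rw [one_div, Real.sqrt_inv]
  rw [hs2, hhalf]
  have hpi : 0 < Real.sqrt Real.pi := Real.sqrt_pos.2 Real.pi_pos
  have h2p : (0:ℝ) < Real.sqrt 2 := by positivity
  have : -(1/2 * y) = -(y/2) := by ring
  rw [this]
  field_simp

lemma gamma_eq {c : ℝ} (hc : 0 ≤ c) :
    cdf (gammaMeasure (1/2) (1/2)) c = 2 * Phi (Real.sqrt c) := by
  rw [cdf_gammaMeasure_eq_integral (by norm_num) (by norm_num)]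
  have hsplit : Set.Iic c = Set.Iic 0 ∪ Set.Ioc 0 c := (Set.Iic_union_Ioc_eq_Iic hc).symm
  rw [hsplit, setIntegral_union (Set.Iic_disjoint_Ioc le_rfl) measurableSet_Ioc
      gamma_integrable.integrableOn gamma_integrable.integrableOn]
  have hz : ∫ x in Set.Iic 0, gammaPDFReal (1/2) (1/2) x = 0 := by
    rw [setIntegral_congr_fun measurableSet_Iic (g := fun _ => (0:ℝ)), integral_zero]
    intro x hx
    rcases lt_or_eq_of_le (show x ≤ 0 from hx) with h | h
    · rw [gammaPDFReal, if_neg (not_le.2 h)]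
    · subst h
      rw [gammaPDFReal, if_pos le_rfl]
      rw [Real.zero_rpow (by norm_num)]
      ring
  rw [hz, zero_add, ← intervalIntegral.integral_of_le hc]
  have hftc : ∫ y in (0:ℝ)..c, gammaPDFReal (1/2) (1/2) y
      = (fun y => 2 * Phi (Real.sqrt y)) c - (fun y => 2 * Phi (Real.sqrt y)) 0 := by
    apply intervalIntegral.integral_eq_sub_of_hasDerivAt_of_le hc
    · exact (continuous_const.mul (Phi_cont.comp Real.continuous_sqrt)).continuousOn
    · intro y hy
      have hsy : 0 < Real.sqrt y := Real.sqrt_pos.2 hy.1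
      have hd : HasDerivAt (fun y => Phi (Real.sqrt y)) (N (Real.sqrt y) * (1 / (2 * Real.sqrt y))) y :=
        (Phi_hasDerivAt (Real.sqrt y)).comp y (Real.hasDerivAt_sqrt hy.1.ne')
      have := hd.const_mul (2:ℝ)
      rw [gamma_pdf_eq hy.1]
      simpa [mul_comm, mul_assoc, mul_left_comm] using this
    · exact gamma_integrable.intervalIntegrable
  rw [hftc]
  simp [Phi, Real.sqrt_zero]

section IG

variable {xi d : ℝ}

/-- the transform u(x) -/
noncomputable def U (xi d x : ℝ) : ℝ := Real.sqrt d / xi * ((x - xi) / Real.sqrt x)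

/-- the transform v(x) -/
noncomputable def V (xi d x : ℝ) : ℝ := Real.sqrt d / xi * ((x + xi) / Real.sqrt x)

lemma hasDerivAt_U (hxi : 0 < xi) {x : ℝ} (hx : 0 < x) :
    HasDerivAt (U xi d) (Real.sqrt d / xi * ((x + xi) / (2 * x * Real.sqrt x))) x := by
  obtain ⟨r, hr0, rfl⟩ : ∃ r, 0 < r ∧ r * r = x :=
    ⟨Real.sqrt x, Real.sqrt_pos.2 hx, Real.mul_self_sqrt hx.le⟩
  have hs : Real.sqrt (r * r) = r := Real.sqrt_mul_self hr0.le
  have hdiv : HasDerivAt (fun x => (x - xi) / Real.sqrt x)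
      ((1 * Real.sqrt (r * r) - (r * r - xi) * (1 / (2 * Real.sqrt (r * r)))) /
        (Real.sqrt (r * r)) ^ 2) (r * r) :=
    ((hasDerivAt_id _).sub_const xi).div (Real.hasDerivAt_sqrt hx.ne') (by rw [hs]; exact hr0.ne')
  have h := hdiv.const_mul (Real.sqrt d / xi)
  refine h.congr_deriv ?_
  symm
  rw [hs]
  field_simp
  ring

lemma hasDerivAt_V (hxi : 0 < xi) {x : ℝ} (hx : 0 < x) :
    HasDerivAt (V xi d) (Real.sqrt d / xi * ((x - xi) / (2 * x * Real.sqrt x))) x := by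
  obtain ⟨r, hr0, rfl⟩ : ∃ r, 0 < r ∧ r * r = x :=
    ⟨Real.sqrt x, Real.sqrt_pos.2 hx, Real.mul_self_sqrt hx.le⟩
  have hs : Real.sqrt (r * r) = r := Real.sqrt_mul_self hr0.le
  have hdiv : HasDerivAt (fun x => (x + xi) / Real.sqrt x)
      ((1 * Real.sqrt (r * r) - (r * r + xi) * (1 / (2 * Real.sqrt (r * r)))) /
        (Real.sqrt (r * r)) ^ 2) (r * r) :=
    ((hasDerivAt_id _).add_const xi).div (Real.hasDerivAt_sqrt hx.ne') (by rw [hs]; exact hr0.ne')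
  have h := hdiv.const_mul (Real.sqrt d / xi)
  refine h.congr_deriv ?_
  symm
  rw [hs]
  field_simp
  ring

/-- antiderivative of the inverse Gaussian density -/
noncomputable def G (xi d x : ℝ) : ℝ :=
  Phi (U xi d x) + Real.exp (2 * d / xi) * Phi (-(V xi d x))

lemma hasDerivAt_G (hxi : 0 < xi) (hd : 0 < d) {x : ℝ} (hx : 0 < x) :
    HasDerivAt (G xi d) (invGaussPDF xi d x) x := by
  have h1 := (Phi_hasDerivAt (U xi d x)).comp x (hasDerivAt_U (d := d) hxi hx)
  have h2 := ((Phi_hasDerivAt (-(V xi d x))).comp x (hasDerivAt_V (d := d) hxi hx).neg).const_mul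
    (Real.exp (2 * d / xi))
  have h := h1.add h2
  refine h.congr_deriv ?_
  symm
  rw [N_even]
  obtain ⟨r, hr0, rfl⟩ : ∃ r, 0 < r ∧ r * r = x :=
    ⟨Real.sqrt x, Real.sqrt_pos.2 hx, Real.mul_self_sqrt hx.le⟩
  obtain ⟨e, he0, rfl⟩ : ∃ e, 0 < e ∧ e * e = d :=
    ⟨Real.sqrt d, Real.sqrt_pos.2 hd, Real.mul_self_sqrt hd.le⟩
  have hs : Real.sqrt (r * r) = r := Real.sqrt_mul_self hr0.le
  have hsd : Real.sqrt (e * e) = e := Real.sqrt_mul_self he0.le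
  set q := Real.sqrt (2 * Real.pi) with hqdef
  have hq : q * q = 2 * Real.pi := Real.mul_self_sqrt (by positivity)
  have hq0 : (0:ℝ) < q := Real.sqrt_pos.2 (by positivity)
  set E := Real.exp (-(e * e * (r * r - xi) ^ 2) / (2 * xi ^ 2 * (r * r))) with hEdef
  have hA : Real.exp (-(U xi (e * e) (r * r) ^ 2 / 2)) = E := by
    rw [hEdef]
    congr 1
    rw [U, hs, hsd]
    field_simp
  have hB : Real.exp (-(V xi (e * e) (r * r) ^ 2 / 2))
      = Real.exp (-(2 * (e * e) / xi)) * E := by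
    rw [hEdef, ← Real.exp_add]
    congr 1
    rw [V, hs, hsd]
    field_simp
    ring
  have hsqrt : Real.sqrt (e * e / (2 * Real.pi * (r * r) ^ 3)) = e / (q * (r * r) * r) := by
    rw [← hq, show e * e / (q * q * (r * r) ^ 3) = (e / (q * (r * r) * r)) ^ 2 by
      field_simp]
    exact Real.sqrt_sq (by positivity)
  have hK : Real.exp (2 * (e * e) / xi) * Real.exp (-(2 * (e * e) / xi)) = 1 := by
    rw [← Real.exp_add]; simp
  rw [invGaussPDF, if_pos hx, hsqrt]
  unfold N
  rw [hA, hB, hs]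
  have key : ∀ z : ℝ, Real.exp (2 * (e * e) / xi) *
      (Real.exp (-(2 * (e * e) / xi)) * E / q * z) = E / q * z := by
    intro z
    rw [show Real.exp (2 * (e * e) / xi) * (Real.exp (-(2 * (e * e) / xi)) * E / q * z)
      = (Real.exp (2 * (e * e) / xi) * Real.exp (-(2 * (e * e) / xi))) * (E / q * z) from by ring,
      hK, one_mul]
  rw [key, ← hEdef]
  have hxine : xi ≠ 0 := hxi.ne'
  rw [hsd, ← hqdef]
  have main : ∀ A Q E R XI : ℝ, Q ≠ 0 → XI ≠ 0 → R ≠ 0 →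
      A / (Q * (R * R) * R) * E =
        E / Q * (A / XI * ((R * R + XI) / (2 * (R * R) * R))) +
          E / Q * -(A / XI * ((R * R - XI) / (2 * (R * R) * R))) := by
    intro A Q E R XI hQ hXI hR
    field_simp
    ring
  exact main e q E r xi hq0.ne' hxine hr0.ne'

lemma invGaussPDF_nonneg (xi d x : ℝ) : 0 ≤ invGaussPDF xi d x := by
  rw [invGaussPDF]; split_ifs <;> positivity

lemma ig_contOn (xi d : ℝ) (hxi : 0 < xi) {A : Set ℝ} (hA : ∀ x ∈ A, 0 < x) :
    ContinuousOn (invGaussPDF xi d) A := by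
  have hcont : ContinuousOn (fun x => Real.sqrt (d / (2 * Real.pi * x ^ 3)) *
      Real.exp (-(d * (x - xi) ^ 2) / (2 * xi ^ 2 * x))) A := by
    apply ContinuousOn.mul
    · apply Real.continuous_sqrt.comp_continuousOn
      apply ContinuousOn.div continuousOn_const (by fun_prop)
      intro x hx; have := hA x hx; positivity
    · apply Real.continuous_exp.comp_continuousOn
      apply ContinuousOn.div (by fun_prop) (by fun_prop)
      intro x hx
      have hx0 := hA x hx
      positivity
  apply hcont.congr
  intro x hx
  rw [invGaussPDF, if_pos (hA x hx)]

lemma ig_interval (hxi : 0 < xi) (hd : 0 < d) {t : ℝ} (ht0 : 0 < t) (ht : t ≤ xi) :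
    ∫ x in t..(xi ^ 2 / t), invGaussPDF xi d x
      = 2 * Phi (Real.sqrt d / xi * ((xi - t) / Real.sqrt t)) := by
  obtain ⟨s, hs0, rfl⟩ : ∃ s, 0 < s ∧ s * s = t :=
    ⟨Real.sqrt t, Real.sqrt_pos.2 ht0, Real.mul_self_sqrt ht0.le⟩
  have hss : Real.sqrt (s * s) = s := Real.sqrt_mul_self hs0.le
  have hts : s * s ≤ xi ^ 2 / (s * s) := by
    rw [le_div_iff₀ ht0]; nlinarith
  have hpos : ∀ x ∈ Set.uIcc (s * s) (xi ^ 2 / (s * s)), 0 < x := by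
    intro x hx
    rw [Set.uIcc_of_le hts] at hx
    exact lt_of_lt_of_le ht0 hx.1
  have hftc : ∫ x in (s * s)..(xi ^ 2 / (s * s)), invGaussPDF xi d x
      = G xi d (xi ^ 2 / (s * s)) - G xi d (s * s) := by
    apply intervalIntegral.integral_eq_sub_of_hasDerivAt
    · intro x hx; exact hasDerivAt_G hxi hd (hpos x hx)
    · exact (ig_contOn xi d hxi hpos).intervalIntegrable
  rw [hftc]
  have hsq : Real.sqrt (xi ^ 2 / (s * s)) = xi / s := by
    rw [Real.sqrt_div (sq_nonneg xi), Real.sqrt_sq hxi.le, hss]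
  set a := Real.sqrt d / xi * ((xi - s * s) / Real.sqrt (s * s)) with hadef
  have hUs : U xi d (xi ^ 2 / (s * s)) = a := by
    rw [U, hsq, hadef, hss]
    field_simp
  have hUt : U xi d (s * s) = -a := by
    rw [U, hadef, hss]
    field_simp
    ring
  have hVs : V xi d (xi ^ 2 / (s * s)) = V xi d (s * s) := by
    rw [V, V, hsq, hss]
    field_simp
    ring
  rw [G, G, hUs, hUt, hVs, show Phi (-a) = -Phi a from Phi_neg a]
  ring

end IG

end IGaux

theorem invGauss_tail_lower_bound (ξ δ : ℝ) (hξ : 0 < ξ) (hδ : 0 < δ)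
    {Ω : Type*} [MeasurableSpace Ω] (μ : Measure Ω) [IsProbabilityMeasure μ]
    (X : Ω → ℝ) (hX : Measurable X)
    (hlaw : Measure.map X μ = volume.withDensity (fun x => ENNReal.ofReal (invGaussPDF ξ δ x)))
    (t : ℝ) (ht0 : 0 < t) (ht : t ≤ ξ) :
    cdf (gammaMeasure (1 / 2) (1 / 2)) (δ * (t - ξ) ^ 2 / (ξ ^ 2 * t)) ≤
      (μ {ω | t < X ω}).toReal := by
  have hc0 : 0 ≤ δ * (t - ξ) ^ 2 / (ξ ^ 2 * t) := by positivity
  have ha : Real.sqrt (δ * (t - ξ) ^ 2 / (ξ ^ 2 * t))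
      = Real.sqrt δ / ξ * ((ξ - t) / Real.sqrt t) := by
    have hanon : 0 ≤ Real.sqrt δ / ξ * ((ξ - t) / Real.sqrt t) :=
      mul_nonneg (div_nonneg (Real.sqrt_nonneg δ) hξ.le)
        (div_nonneg (sub_nonneg.2 ht) (Real.sqrt_nonneg t))
    rw [show δ * (t - ξ) ^ 2 / (ξ ^ 2 * t)
        = (Real.sqrt δ / ξ * ((ξ - t) / Real.sqrt t)) ^ 2 by
      rw [mul_pow, div_pow, div_pow, Real.sq_sqrt hδ.le, Real.sq_sqrt ht0.le]
      rw [show (t - ξ) ^ 2 = (ξ - t) ^ 2 by ring]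
      ring]
    exact Real.sqrt_sq hanon
  rw [IGaux.gamma_eq hc0, ha, ← IGaux.ig_interval hξ hδ ht0 ht]
  have hts : t ≤ ξ ^ 2 / t := by rw [le_div_iff₀ ht0]; nlinarith
  have hmeas : μ {ω | t < X ω}
      = ∫⁻ x in Set.Ioi t, ENNReal.ofReal (invGaussPDF ξ δ x) := by
    have hset : {ω | t < X ω} = X ⁻¹' (Set.Ioi t) := rfl
    rw [hset, ← Measure.map_apply hX measurableSet_Ioi, hlaw,
      withDensity_apply _ measurableSet_Ioi]
  have hint : IntegrableOn (invGaussPDF ξ δ) (Set.Ioc t (ξ ^ 2 / t)) := by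
    have hpos : ∀ x ∈ Set.Icc t (ξ ^ 2 / t), 0 < x := fun x hx =>
      lt_of_lt_of_le ht0 hx.1
    exact ((IGaux.ig_contOn ξ δ hξ hpos).integrableOn_Icc).mono_set
      Set.Ioc_subset_Icc_self
  have hof : ENNReal.ofReal (∫ x in t..(ξ ^ 2 / t), invGaussPDF ξ δ x)
      = ∫⁻ x in Set.Ioc t (ξ ^ 2 / t), ENNReal.ofReal (invGaussPDF ξ δ x) := by
    rw [intervalIntegral.integral_of_le hts]
    exact ofReal_integral_eq_lintegral_ofReal hint
      (ae_of_all _ (fun x => IGaux.invGaussPDF_nonneg ξ δ x))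
  rw [← ENNReal.ofReal_le_iff_le_toReal (measure_ne_top μ _), hmeas, hof]
  exact lintegral_mono_set Set.Ioc_subset_Ioi_self
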